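/- arXiv:2604.16998 — 4 statements merged into one kernel-verified Lean document; each statement's English description precedes it below -/
import Mathlib

section
/- Let s > 1/2. There exists a constant C = C(s) > 0 such that for all sequences a, b : ℤ → ℂ with Σ_{m∈ℤ} (1+m²)^{-s} |a(m)|² < ∞ and Σ_{m∈ℤ} (1+m²)^{s} |b(m)|² < ∞, the convolution c(n) := Σ_{m∈ℤ} a(m) b(n−m) converges absolutely for every n ∈ ℤ, and Σ_{n∈ℤ} (1+n²)^{-s} |c(n)|² ≤ C² (Σ_{m∈ℤ} (1+m²)^{-s} |a(m)|²) (Σ_{m∈ℤ} (1+m²)^{s} |b(m)|²). -/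
open scoped BigOperators

/-- Cauchy-Schwarz for tsums of nonnegative sequences. -/
private lemma aux_cs {f g : ℤ → ℝ} (hf0 : ∀ i, 0 ≤ f i) (hg0 : ∀ i, 0 ≤ g i)
    (hf : Summable (fun i => f i ^ 2)) (hg : Summable (fun i => g i ^ 2)) :
    Summable (fun i => f i * g i) ∧
      (∑' i, f i * g i) ≤ Real.sqrt ((∑' i, f i ^ 2) * (∑' i, g i ^ 2)) := by
  have hsum : Summable (fun i => f i * g i) := by
    refine Summable.of_nonneg_of_le (fun i => mul_nonneg (hf0 i) (hg0 i))
      (fun i => ?_) ((hf.add hg).div_const 2)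
    nlinarith [sq_nonneg (f i - g i)]
  refine ⟨hsum, Summable.tsum_le_of_sum_le hsum fun u => ?_⟩
  have h1 : (∑ i ∈ u, f i * g i) ^ 2 ≤ (∑ i ∈ u, f i ^ 2) * (∑ i ∈ u, g i ^ 2) :=
    Finset.sum_mul_sq_le_sq_mul_sq u f g
  have h2 : (∑ i ∈ u, f i ^ 2) ≤ ∑' i, f i ^ 2 := Summable.sum_le_tsum u (fun _ _ => sq_nonneg _) hf
  have h3 : (∑ i ∈ u, g i ^ 2) ≤ ∑' i, g i ^ 2 := Summable.sum_le_tsum u (fun _ _ => sq_nonneg _) hg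
  have h0 : (0:ℝ) ≤ ∑ i ∈ u, f i * g i :=
    Finset.sum_nonneg fun i _ => mul_nonneg (hf0 i) (hg0 i)
  rw [Real.le_sqrt h0 (mul_nonneg (tsum_nonneg fun i => sq_nonneg _)
    (tsum_nonneg fun i => sq_nonneg _))]
  exact h1.trans (mul_le_mul h2 h3 (Finset.sum_nonneg fun i _ => sq_nonneg _)
    (tsum_nonneg fun i => sq_nonneg _))

/-- summability of the weight. -/
private lemma aux_sumK {s : ℝ} (hs : 1 / 2 < s) :
    Summable (fun k : ℤ => (1 + (k : ℝ) ^ 2) ^ (-s)) := by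
  have hs0 : (0:ℝ) < s := lt_trans (by norm_num) hs
  have h1 : Summable (fun k : ℤ => 1 / |(k : ℝ) + 0| ^ (2 * s)) := by
    rw [Real.summable_one_div_int_add_rpow]
    linarith
  have h2 : Summable (fun k : ℤ => 1 / |(k : ℝ) + 0| ^ (2 * s) + if k = 0 then 1 else 0) := by
    refine h1.add ?_
    exact summable_of_ne_finset_zero (s := {0}) (fun k hk => by
      simp [Finset.mem_singleton] at hk; simp [hk])
  refine Summable.of_nonneg_of_le (fun k => Real.rpow_nonneg (by positivity) _) (fun k => ?_) h2
  rcases eq_or_ne k 0 with rfl | hk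
  · have e0 : (1 + ((0:ℤ):ℝ)^2) ^ (-s) = 1 := by norm_num
    rw [e0, if_pos rfl]
    have : (0:ℝ) ≤ 1 / |((0:ℤ):ℝ) + 0| ^ (2*s) := by positivity
    linarith
  · have hk1 : (1:ℝ) ≤ |(k:ℝ)| := by
      have h' : (1:ℤ) ≤ |k| := Int.one_le_abs (by exact_mod_cast hk)
      calc (1:ℝ) ≤ ((|k| : ℤ) : ℝ) := by exact_mod_cast h'
      _ = |(k:ℝ)| := by push_cast; ring
    have hkpos : (0:ℝ) < |(k:ℝ)| := lt_of_lt_of_le zero_lt_one hk1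
    have key : (1 + (k:ℝ)^2) ^ (-s) ≤ 1 / |(k:ℝ) + 0| ^ (2*s) := by
      rw [add_zero, one_div, ← Real.rpow_neg (abs_nonneg _)]
      have e1 : |(k:ℝ)| ^ (-(2*s)) = ((k:ℝ)^2) ^ (-s) := by
        rw [show -(2*s) = 2 * (-s) by ring, Real.rpow_mul (abs_nonneg _),
          show |(k:ℝ)| ^ (2:ℝ) = (k:ℝ)^2 by
            rw [show (2:ℝ) = ((2:ℕ):ℝ) by norm_num, Real.rpow_natCast, sq_abs]]
      rw [e1]
      apply Real.rpow_le_rpow_of_nonpos (by positivity) (by nlinarith) (by linarith)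
    refine key.trans (le_add_of_nonneg_right ?_)
    split <;> norm_num

/-- abstract Peetre-type bound. -/
private lemma aux_key {t x y z : ℝ} (ht : 0 ≤ t) (hx : 0 < x) (hy : 0 ≤ y) (hz : 0 < z)
    (h : y ≤ 4 * x ∨ y ≤ 4 * z) :
    x ^ (-t) * y ^ t * z ^ (-t) ≤ 4 ^ t * (z ^ (-t) + x ^ (-t)) := by
  have hxt : (0:ℝ) ≤ x ^ (-t) := Real.rpow_nonneg hx.le _
  have hzt : (0:ℝ) ≤ z ^ (-t) := Real.rpow_nonneg hz.le _
  have h4 : (0:ℝ) ≤ (4:ℝ) ^ t := Real.rpow_nonneg (by norm_num) _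
  rcases h with h | h
  · have h1 : y ^ t ≤ 4 ^ t * x ^ t := by
      rw [← Real.mul_rpow (by norm_num) hx.le]
      exact Real.rpow_le_rpow hy h ht
    have h2 : x ^ (-t) * x ^ t = 1 := by
      rw [← Real.rpow_add hx]; simp
    calc x ^ (-t) * y ^ t * z ^ (-t) ≤ x ^ (-t) * (4 ^ t * x ^ t) * z ^ (-t) := by
          apply mul_le_mul_of_nonneg_right (mul_le_mul_of_nonneg_left h1 hxt) hzt
    _ = 4 ^ t * (x ^ (-t) * x ^ t) * z ^ (-t) := by ring
    _ = 4 ^ t * z ^ (-t) := by rw [h2]; ring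
    _ ≤ 4 ^ t * (z ^ (-t) + x ^ (-t)) := by nlinarith
  · have h1 : y ^ t ≤ 4 ^ t * z ^ t := by
      rw [← Real.mul_rpow (by norm_num) hz.le]
      exact Real.rpow_le_rpow hy h ht
    have h2 : z ^ (-t) * z ^ t = 1 := by
      rw [← Real.rpow_add hz]; simp
    calc x ^ (-t) * y ^ t * z ^ (-t) ≤ x ^ (-t) * (4 ^ t * z ^ t) * z ^ (-t) := by
          apply mul_le_mul_of_nonneg_right (mul_le_mul_of_nonneg_left h1 hxt) hzt
    _ = 4 ^ t * x ^ (-t) * (z ^ (-t) * z ^ t) := by ring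
    _ = 4 ^ t * x ^ (-t) := by rw [h2]; ring
    _ ≤ 4 ^ t * (z ^ (-t) + x ^ (-t)) := by nlinarith

private lemma aux_cases (n m : ℤ) :
    (1 + (m:ℝ)^2) ≤ 4 * (1 + (n:ℝ)^2) ∨ (1 + (m:ℝ)^2) ≤ 4 * (1 + ((n - m : ℤ):ℝ)^2) := by
  push_cast
  by_cases h : (1 + (m:ℝ)^2) ≤ 4 * (1 + (n:ℝ)^2)
  · exact Or.inl h
  · right
    push_neg at h
    nlinarith [sq_nonneg (2*(n:ℝ) - (m:ℝ))]

set_option maxHeartbeats 2000000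

/-- Duality product estimate `‖fh‖_{H^{-s}} ≤ C ‖f‖_{H^{-s}} ‖h‖_{H^s}` for `s > 1/2`,
in Fourier-coefficient form: the convolution `c(n) = Σ_m a(m) b(n−m)` converges
absolutely and `Σ_n (1+n²)^{-s} |c(n)|² ≤ C² (Σ (1+m²)^{-s}|a|²)(Σ (1+m²)^{s}|b|²)`. -/
theorem stmt_3 (s : ℝ) (hs : 1 / 2 < s) :
    ∃ C : ℝ, 0 < C ∧ ∀ a b : ℤ → ℂ,
      Summable (fun m : ℤ => (1 + (m : ℝ) ^ 2) ^ (-s) * ‖a m‖ ^ 2) →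
      Summable (fun m : ℤ => (1 + (m : ℝ) ^ 2) ^ s * ‖b m‖ ^ 2) →
      (∀ n : ℤ, Summable (fun m : ℤ => ‖a m * b (n - m)‖)) ∧
      Summable (fun n : ℤ => (1 + (n : ℝ) ^ 2) ^ (-s) * ‖∑' m : ℤ, a m * b (n - m)‖ ^ 2) ∧
      (∑' n : ℤ, (1 + (n : ℝ) ^ 2) ^ (-s) * ‖∑' m : ℤ, a m * b (n - m)‖ ^ 2)
        ≤ C ^ 2 * (∑' m : ℤ, (1 + (m : ℝ) ^ 2) ^ (-s) * ‖a m‖ ^ 2)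
            * (∑' m : ℤ, (1 + (m : ℝ) ^ 2) ^ s * ‖b m‖ ^ 2) := by
  have hs0 : (0:ℝ) < s := lt_trans (by norm_num) hs
  set t : ℝ := s / 2 with htdef
  have ht0 : (0:ℝ) < t := by positivity
  have hK : Summable (fun k : ℤ => (1 + (k : ℝ) ^ 2) ^ (-s)) := aux_sumK hs
  set K : ℝ := ∑' k : ℤ, (1 + (k : ℝ) ^ 2) ^ (-s) with hKdef
  have hK0 : 0 ≤ K := tsum_nonneg fun k => Real.rpow_nonneg (by positivity) _
  have hQ0 : (0:ℝ) < (4:ℝ) ^ t := Real.rpow_pos_of_pos (by norm_num) _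
  refine ⟨2 * 4 ^ t * Real.sqrt (K + 1), by positivity, fun a b ha hb => ?_⟩
  have hHpos : ∀ n : ℤ, (0:ℝ) < 1 + (n : ℝ) ^ 2 := fun n => by positivity
  have hH1 : ∀ n : ℤ, (1:ℝ) ≤ 1 + (n : ℝ) ^ 2 := fun n => by nlinarith [sq_nonneg ((n:ℝ))]
  have hsq2 : ∀ (x r : ℝ), 0 < x → (x ^ r) ^ 2 = x ^ (r * 2) := fun x r hx => by
    rw [← Real.rpow_natCast (x ^ r) 2, ← Real.rpow_mul hx.le]
    norm_num
  have hwsq : ∀ k : ℤ, ((1 + (k:ℝ)^2) ^ (-t)) ^ 2 = (1 + (k:ℝ)^2) ^ (-s) := fun k => by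
    rw [hsq2 _ _ (hHpos k), show -t*2 = -s by rw [htdef]; ring]
  set u : ℤ → ℝ := fun m => (1 + (m : ℝ) ^ 2) ^ (-t) * ‖a m‖ with hudef
  set v : ℤ → ℝ := fun m => (1 + (m : ℝ) ^ 2) ^ t * ‖b m‖ with hvdef
  have hu0 : ∀ m, 0 ≤ u m := fun m => mul_nonneg (Real.rpow_nonneg (hHpos m).le _) (norm_nonneg _)
  have hv0 : ∀ m, 0 ≤ v m := fun m => mul_nonneg (Real.rpow_nonneg (hHpos m).le _) (norm_nonneg _)
  have husq : ∀ m, u m ^ 2 = (1 + (m:ℝ)^2) ^ (-s) * ‖a m‖ ^ 2 := fun m => by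
    simp only [hudef]; rw [mul_pow, hwsq m]
  have hvsq : ∀ m, v m ^ 2 = (1 + (m:ℝ)^2) ^ s * ‖b m‖ ^ 2 := fun m => by
    simp only [hvdef]; rw [mul_pow, hsq2 _ _ (hHpos m), show t*2 = s by rw [htdef]; ring]
  have hA : Summable (fun m => u m ^ 2) := (summable_congr husq).mpr ha
  have hB : Summable (fun m => v m ^ 2) := (summable_congr hvsq).mpr hb
  set A : ℝ := ∑' m : ℤ, (1 + (m : ℝ) ^ 2) ^ (-s) * ‖a m‖ ^ 2 with hAdef
  set B : ℝ := ∑' m : ℤ, (1 + (m : ℝ) ^ 2) ^ s * ‖b m‖ ^ 2 with hBdef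
  have hAu : ∑' m, u m ^ 2 = A := tsum_congr husq
  have hBv : ∑' m, v m ^ 2 = B := tsum_congr hvsq
  have hA0 : 0 ≤ A := hAu ▸ tsum_nonneg fun m => sq_nonneg _
  have hB0 : 0 ≤ B := hBv ▸ tsum_nonneg fun m => sq_nonneg _
  have hw2 : Summable (fun k : ℤ => ((1 + (k:ℝ)^2) ^ (-t)) ^ 2) := (summable_congr hwsq).mpr hK
  have hbnorm : ∀ k : ℤ, ‖b k‖ = (1 + (k:ℝ)^2) ^ (-t) * v k := fun k => by
    simp only [hvdef]; rw [← mul_assoc, ← Real.rpow_add (hHpos k)]; norm_num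
  have hcsb := aux_cs (f := fun k : ℤ => (1 + (k:ℝ)^2) ^ (-t)) (g := v)
      (fun k => Real.rpow_nonneg (hHpos k).le _) hv0 hw2 hB
  have hbsum : Summable (fun k : ℤ => ‖b k‖) := (summable_congr hbnorm).mpr hcsb.1
  set L : ℝ := ∑' k : ℤ, ‖b k‖ with hLdef
  have hL0 : 0 ≤ L := tsum_nonneg fun k => norm_nonneg _
  have hLle : L ≤ Real.sqrt (K * B) := by
    have e : ∑' k : ℤ, ‖b k‖ = ∑' k : ℤ, (1 + (k:ℝ)^2) ^ (-t) * v k := tsum_congr hbnorm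
    rw [hLdef, e]
    refine hcsb.2.trans (le_of_eq ?_)
    rw [tsum_congr hwsq, hBv]
  have hble : ∀ k, ‖b k‖ ≤ L := fun k => Summable.le_tsum hbsum k (fun i _ => norm_nonneg _)
  have hbn : ∀ n : ℤ, Summable (fun m : ℤ => ‖b (n - m)‖) := fun n =>
    ((Equiv.subLeft n).summable_iff (f := fun k : ℤ => ‖b k‖)).mpr hbsum
  have hbn_tsum : ∀ n : ℤ, ∑' m, ‖b (n - m)‖ = L := fun n =>
    Equiv.tsum_eq (Equiv.subLeft n) (fun k => ‖b k‖)
  have hvn2 : ∀ n : ℤ, Summable (fun m => v (n - m) ^ 2) := fun n =>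
    ((Equiv.subLeft n).summable_iff (f := fun k : ℤ => v k ^ 2)).mpr hB
  have hvn2_tsum : ∀ n : ℤ, ∑' m, v (n - m) ^ 2 = B := fun n =>
    (Equiv.tsum_eq (Equiv.subLeft n) (fun k => v k ^ 2)).trans hBv
  have hcs1 : ∀ n : ℤ, Summable (fun m => u m * v (n - m)) ∧
      (∑' m, u m * v (n - m)) ≤ Real.sqrt (A * B) := fun n => by
    obtain ⟨h1, h2⟩ := aux_cs hu0 (fun m => hv0 _) hA (hvn2 n)
    exact ⟨h1, h2.trans (le_of_eq (by rw [hAu, hvn2_tsum n]))⟩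
  have keybound : ∀ n m : ℤ, (1 + (n:ℝ)^2) ^ (-t) * (‖a m‖ * ‖b (n - m)‖) ≤
      4 ^ t * (u m * ‖b (n - m)‖) + 4 ^ t * ((1 + (n:ℝ)^2) ^ (-t) * (u m * v (n - m))) := by
    intro n m
    have ea : ‖a m‖ = (1 + (m:ℝ)^2) ^ t * u m := by
      simp only [hudef]; rw [← mul_assoc, ← Real.rpow_add (hHpos m)]; norm_num
    have eb : ‖b (n - m)‖ = (1 + ((n - m : ℤ):ℝ)^2) ^ (-t) * v (n - m) := hbnorm (n - m)
    have hkey := aux_key (t := t) ht0.le (hHpos n) (hHpos m).le (hHpos (n - m)) (aux_cases n m)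
    have huv : 0 ≤ u m * v (n - m) := mul_nonneg (hu0 m) (hv0 _)
    calc (1 + (n:ℝ)^2) ^ (-t) * (‖a m‖ * ‖b (n - m)‖)
        = ((1 + (n:ℝ)^2) ^ (-t) * (1 + (m:ℝ)^2) ^ t * (1 + ((n-m:ℤ):ℝ)^2) ^ (-t))
            * (u m * v (n - m)) := by rw [ea, eb]; ring
      _ ≤ (4 ^ t * ((1 + ((n-m:ℤ):ℝ)^2) ^ (-t) + (1 + (n:ℝ)^2) ^ (-t))) * (u m * v (n - m)) :=
          mul_le_mul_of_nonneg_right hkey huv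
      _ = 4 ^ t * (u m * ((1 + ((n-m:ℤ):ℝ)^2) ^ (-t) * v (n - m)))
            + 4 ^ t * ((1 + (n:ℝ)^2) ^ (-t) * (u m * v (n - m))) := by ring
      _ = _ := by rw [← eb]
  have hbv : ∀ k : ℤ, ‖b k‖ ≤ v k := fun k => by
    have h1 : (1:ℝ) ≤ (1 + (k:ℝ)^2) ^ t := by
      calc (1:ℝ) = 1 ^ t := (Real.one_rpow t).symm
      _ ≤ (1 + (k:ℝ)^2) ^ t := Real.rpow_le_rpow zero_le_one (hH1 k) ht0.le
    simp only [hvdef]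
    nlinarith [norm_nonneg (b k)]
  have hsD : ∀ n : ℤ, Summable (fun m => u m * ‖b (n - m)‖) := fun n => by
    refine Summable.of_nonneg_of_le (fun m => mul_nonneg (hu0 m) (norm_nonneg _))
      (fun m => mul_le_mul_of_nonneg_left (hbv (n - m)) (hu0 m)) (hcs1 n).1
  have claim1 : ∀ n : ℤ, Summable (fun m : ℤ => ‖a m * b (n - m)‖) := fun n => by
    have hmaj : Summable (fun m => (1 + (n:ℝ)^2) ^ t * (4 ^ t * (u m * ‖b (n - m)‖)
        + 4 ^ t * ((1 + (n:ℝ)^2) ^ (-t) * (u m * v (n - m))))) :=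
      (((hsD n).mul_left _).add (((hcs1 n).1.mul_left _).mul_left _)).mul_left _
    refine Summable.of_nonneg_of_le (fun m => norm_nonneg _) (fun m => ?_) hmaj
    rw [norm_mul]
    have e2 : (1 + (n:ℝ)^2) ^ t * ((1 + (n:ℝ)^2) ^ (-t) * (‖a m‖ * ‖b (n - m)‖))
        = ‖a m‖ * ‖b (n - m)‖ := by
      rw [← mul_assoc, ← Real.rpow_add (hHpos n)]; norm_num
    calc ‖a m‖ * ‖b (n - m)‖
        = (1 + (n:ℝ)^2) ^ t * ((1 + (n:ℝ)^2) ^ (-t) * (‖a m‖ * ‖b (n - m)‖)) := e2.symm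
      _ ≤ _ := mul_le_mul_of_nonneg_left (keybound n m) (Real.rpow_nonneg (hHpos n).le _)
  have hcle : ∀ n : ℤ, ‖∑' m : ℤ, a m * b (n - m)‖ ≤ ∑' m : ℤ, ‖a m‖ * ‖b (n - m)‖ := fun n =>
    (norm_tsum_le_tsum_norm (claim1 n)).trans (le_of_eq (tsum_congr fun m => norm_mul _ _))
  set D : ℤ → ℝ := fun n => ∑' m, u m * ‖b (n - m)‖ with hDdef
  have hD0 : ∀ n, 0 ≤ D n := fun n => tsum_nonneg fun m => mul_nonneg (hu0 m) (norm_nonneg _)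
  have hctilde : ∀ n : ℤ, (1 + (n:ℝ)^2) ^ (-t) * ‖∑' m : ℤ, a m * b (n - m)‖ ≤
      4 ^ t * D n + (4 ^ t * Real.sqrt (A * B)) * (1 + (n:ℝ)^2) ^ (-t) := fun n => by
    have hxnn : 0 ≤ (1 + (n:ℝ)^2) ^ (-t) := Real.rpow_nonneg (hHpos n).le _
    have hsum_lhs : Summable (fun m => (1 + (n:ℝ)^2) ^ (-t) * (‖a m‖ * ‖b (n - m)‖)) :=
      ((summable_congr fun m => norm_mul (a m) (b (n - m))).mp (claim1 n)).mul_left _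
    have hsum_rhs : Summable (fun m => 4 ^ t * (u m * ‖b (n - m)‖)
        + 4 ^ t * ((1 + (n:ℝ)^2) ^ (-t) * (u m * v (n - m)))) :=
      ((hsD n).mul_left _).add (((hcs1 n).1.mul_left _).mul_left _)
    calc (1 + (n:ℝ)^2) ^ (-t) * ‖∑' m : ℤ, a m * b (n - m)‖
        ≤ (1 + (n:ℝ)^2) ^ (-t) * ∑' m, ‖a m‖ * ‖b (n - m)‖ :=
          mul_le_mul_of_nonneg_left (hcle n) hxnn
      _ = ∑' m, (1 + (n:ℝ)^2) ^ (-t) * (‖a m‖ * ‖b (n - m)‖) := tsum_mul_left.symm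
      _ ≤ ∑' m, (4 ^ t * (u m * ‖b (n - m)‖)
            + 4 ^ t * ((1 + (n:ℝ)^2) ^ (-t) * (u m * v (n - m)))) :=
          Summable.tsum_le_tsum (fun m => keybound n m) hsum_lhs hsum_rhs
      _ = 4 ^ t * D n + 4 ^ t * ((1 + (n:ℝ)^2) ^ (-t) * ∑' m, u m * v (n - m)) := by
          rw [Summable.tsum_add ((hsD n).mul_left _) (((hcs1 n).1.mul_left _).mul_left _),
            tsum_mul_left, tsum_mul_left, tsum_mul_left]
      _ ≤ 4 ^ t * D n + (4 ^ t * Real.sqrt (A * B)) * (1 + (n:ℝ)^2) ^ (-t) := by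
          have h' : (1 + (n:ℝ)^2) ^ (-t) * (∑' m, u m * v (n - m))
              ≤ (1 + (n:ℝ)^2) ^ (-t) * Real.sqrt (A*B) :=
            mul_le_mul_of_nonneg_left (hcs1 n).2 hxnn
          have h'' := mul_le_mul_of_nonneg_left h' hQ0.le
          nlinarith [h'']
  set F : ℤ → ℝ := fun n => ∑' m : ℤ, u m ^ 2 * ‖b (n - m)‖ with hFdef
  have hF0 : ∀ n, 0 ≤ F n := fun n => tsum_nonneg fun m => mul_nonneg (sq_nonneg _) (norm_nonneg _)
  have hbm_tsum : ∀ m : ℤ, ∑' n : ℤ, ‖b (n - m)‖ = L := fun m =>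
    Equiv.tsum_eq (Equiv.subRight m) (fun k : ℤ => ‖b k‖)
  have hgc : ∀ m : ℤ, Summable (fun n : ℤ => u m ^ 2 * ‖b (n - m)‖) := fun m =>
    (((Equiv.subRight m).summable_iff (f := fun k : ℤ => ‖b k‖)).mpr hbsum).mul_left (u m ^ 2)
  have hg : Summable (fun p : ℤ × ℤ => u p.1 ^ 2 * ‖b (p.2 - p.1)‖) := by
    refine (summable_prod_of_nonneg
      (fun p => mul_nonneg (sq_nonneg _) (norm_nonneg _))).mpr ⟨fun m => hgc m, ?_⟩
    refine Summable.congr (hA.mul_right L) (fun m => ?_)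
    show u m ^ 2 * L = ∑' n : ℤ, u m ^ 2 * ‖b (n - m)‖
    rw [tsum_mul_left, hbm_tsum m]
  have hf' : Summable (fun p : ℤ × ℤ => u p.2 ^ 2 * ‖b (p.1 - p.2)‖) :=
    ((Equiv.prodComm ℤ ℤ).summable_iff
      (f := fun p : ℤ × ℤ => u p.1 ^ 2 * ‖b (p.2 - p.1)‖)).mpr hg
  have hfc : ∀ n : ℤ, Summable (fun m : ℤ => u m ^ 2 * ‖b (n - m)‖) :=
    ((summable_prod_of_nonneg (fun p => mul_nonneg (sq_nonneg _) (norm_nonneg _))).mp hf').1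
  have hFs : Summable F :=
    ((summable_prod_of_nonneg (fun p => mul_nonneg (sq_nonneg _) (norm_nonneg _))).mp hf').2
  have hFsum : ∑' n, F n = A * L := by
    have e1 : ∑' p : ℤ × ℤ, u p.2 ^ 2 * ‖b (p.1 - p.2)‖
        = ∑' (n : ℤ) (m : ℤ), u m ^ 2 * ‖b (n - m)‖ := Summable.tsum_prod' hf' hfc
    have e2 : ∑' p : ℤ × ℤ, u p.2 ^ 2 * ‖b (p.1 - p.2)‖
        = ∑' p : ℤ × ℤ, u p.1 ^ 2 * ‖b (p.2 - p.1)‖ :=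
      Equiv.tsum_eq (Equiv.prodComm ℤ ℤ) (fun p : ℤ × ℤ => u p.1 ^ 2 * ‖b (p.2 - p.1)‖)
    have e3 : ∑' p : ℤ × ℤ, u p.1 ^ 2 * ‖b (p.2 - p.1)‖
        = ∑' (m : ℤ) (n : ℤ), u m ^ 2 * ‖b (n - m)‖ := Summable.tsum_prod' hg hgc
    have e4 : ∑' (m : ℤ) (n : ℤ), u m ^ 2 * ‖b (n - m)‖ = A * L := by
      have e5 : ∀ m : ℤ, ∑' (n : ℤ), u m ^ 2 * ‖b (n - m)‖ = u m ^ 2 * L := fun m => by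
        rw [tsum_mul_left, hbm_tsum m]
      rw [tsum_congr e5, tsum_mul_right, hAu]
    calc ∑' n, F n = ∑' (n : ℤ) (m : ℤ), u m ^ 2 * ‖b (n - m)‖ := rfl
      _ = A * L := by rw [← e1, e2, e3, e4]
  have hD2 : ∀ n, D n ^ 2 ≤ F n * L := fun n => by
    have hf2 : Summable (fun m => (u m * Real.sqrt ‖b (n - m)‖) ^ 2) := by
      refine Summable.of_nonneg_of_le (fun m => sq_nonneg _) (fun m => ?_) (hA.mul_right L)
      rw [mul_pow, Real.sq_sqrt (norm_nonneg _)]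
      exact mul_le_mul_of_nonneg_left (hble _) (sq_nonneg _)
    have hg2 : Summable (fun m => (Real.sqrt ‖b (n - m)‖) ^ 2) :=
      (summable_congr fun m => Real.sq_sqrt (norm_nonneg _)).mpr (hbn n)
    obtain ⟨hs1, hle⟩ := aux_cs (fun m => mul_nonneg (hu0 m) (Real.sqrt_nonneg _))
      (fun m => Real.sqrt_nonneg _) hf2 hg2
    have eD : D n = ∑' m, (u m * Real.sqrt ‖b (n - m)‖) * Real.sqrt ‖b (n - m)‖ :=
      tsum_congr fun m => by rw [mul_assoc (u m), Real.mul_self_sqrt (norm_nonneg _)]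
    have eF : ∑' m, (u m * Real.sqrt ‖b (n - m)‖) ^ 2 = F n :=
      tsum_congr fun m => by rw [mul_pow, Real.sq_sqrt (norm_nonneg _)]
    have eL : ∑' m, (Real.sqrt ‖b (n - m)‖) ^ 2 = L := by
      rw [tsum_congr fun m => Real.sq_sqrt (norm_nonneg (b (n - m))), hbn_tsum n]
    have hDle : D n ≤ Real.sqrt (F n * L) := by
      rw [eD]; exact hle.trans (le_of_eq (by rw [eF, eL]))
    calc D n ^ 2 ≤ Real.sqrt (F n * L) ^ 2 := pow_le_pow_left₀ (hD0 n) hDle 2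
      _ = F n * L := Real.sq_sqrt (mul_nonneg (hF0 n) hL0)
  have hABs : Real.sqrt (A * B) ^ 2 = A * B := Real.sq_sqrt (mul_nonneg hA0 hB0)
  have hptw : ∀ n : ℤ, (1 + (n:ℝ)^2) ^ (-s) * ‖∑' m : ℤ, a m * b (n - m)‖ ^ 2 ≤
      2 * (4 ^ t) ^ 2 * L * F n + 2 * (4 ^ t) ^ 2 * (A * B) * (1 + (n:ℝ)^2) ^ (-s) := fun n => by
    have hxnn : 0 ≤ (1 + (n:ℝ)^2) ^ (-t) := Real.rpow_nonneg (hHpos n).le _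
    have e1 : (1 + (n:ℝ)^2) ^ (-s) * ‖∑' m : ℤ, a m * b (n - m)‖ ^ 2
        = ((1 + (n:ℝ)^2) ^ (-t) * ‖∑' m : ℤ, a m * b (n - m)‖) ^ 2 := by
      rw [mul_pow, hwsq n]
    rw [e1]
    have h3 : ((1 + (n:ℝ)^2) ^ (-t) * ‖∑' m : ℤ, a m * b (n - m)‖) ^ 2
        ≤ (4 ^ t * D n + (4 ^ t * Real.sqrt (A * B)) * (1 + (n:ℝ)^2) ^ (-t)) ^ 2 :=
      pow_le_pow_left₀ (mul_nonneg hxnn (norm_nonneg _)) (hctilde n) 2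
    refine h3.trans ?_
    have base : ∀ p q : ℝ, (p + q) ^ 2 ≤ 2 * p ^ 2 + 2 * q ^ 2 := fun p q => by
      nlinarith [sq_nonneg (p - q)]
    refine (base _ _).trans ?_
    have e4 : ((4 ^ t * Real.sqrt (A * B)) * (1 + (n:ℝ)^2) ^ (-t)) ^ 2
        = (4 ^ t) ^ 2 * (A * B) * (1 + (n:ℝ)^2) ^ (-s) := by
      rw [mul_pow, mul_pow, hABs, hwsq n]
    have e5 : (4 ^ t * D n) ^ 2 = (4 ^ t) ^ 2 * D n ^ 2 := by ring
    rw [e4, e5]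
    have h6 := mul_le_mul_of_nonneg_left (hD2 n) (by positivity : (0:ℝ) ≤ 2 * (4 ^ t) ^ 2)
    nlinarith [h6]
  have hGs : Summable (fun n : ℤ => 2 * (4 ^ t) ^ 2 * L * F n
      + 2 * (4 ^ t) ^ 2 * (A * B) * (1 + (n:ℝ)^2) ^ (-s)) :=
    (hFs.mul_left _).add (hK.mul_left _)
  have claim2 : Summable (fun n : ℤ =>
      (1 + (n:ℝ)^2) ^ (-s) * ‖∑' m : ℤ, a m * b (n - m)‖ ^ 2) :=
    Summable.of_nonneg_of_le
      (fun n => mul_nonneg (Real.rpow_nonneg (hHpos n).le _) (sq_nonneg _)) hptw hGs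
  refine ⟨claim1, claim2, ?_⟩
  have hL2 : L ^ 2 ≤ K * B := by
    have h := Real.sq_sqrt (mul_nonneg hK0 hB0)
    nlinarith [hLle, Real.sqrt_nonneg (K * B)]
  calc ∑' n : ℤ, (1 + (n:ℝ)^2) ^ (-s) * ‖∑' m : ℤ, a m * b (n - m)‖ ^ 2
      ≤ ∑' n : ℤ, (2 * (4 ^ t) ^ 2 * L * F n
          + 2 * (4 ^ t) ^ 2 * (A * B) * (1 + (n:ℝ)^2) ^ (-s)) :=
        Summable.tsum_le_tsum hptw claim2 hGs
    _ = 2 * (4 ^ t) ^ 2 * L * (∑' n, F n) + 2 * (4 ^ t) ^ 2 * (A * B) * K := by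
        rw [Summable.tsum_add (hFs.mul_left _) (hK.mul_left _), tsum_mul_left, tsum_mul_left]
    _ = 2 * (4 ^ t) ^ 2 * L * (A * L) + 2 * (4 ^ t) ^ 2 * (A * B) * K := by rw [hFsum]
    _ ≤ (2 * 4 ^ t * Real.sqrt (K + 1)) ^ 2 * A * B := by
        have e : (2 * 4 ^ t * Real.sqrt (K + 1)) ^ 2 * A * B
            = 4 * (4 ^ t) ^ 2 * (K + 1) * A * B := by
          rw [mul_pow, mul_pow, Real.sq_sqrt (by linarith : (0:ℝ) ≤ K + 1)]; ring
        rw [e]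
        have h1 : 2 * (4 ^ t) ^ 2 * L * (A * L) = 2 * (4 ^ t) ^ 2 * A * L ^ 2 := by ring
        have h2 : 2 * (4 ^ t) ^ 2 * A * L ^ 2 ≤ 2 * (4 ^ t) ^ 2 * A * (K * B) :=
          mul_le_mul_of_nonneg_left hL2 (by positivity)
        rw [h1]
        nlinarith [h2, mul_nonneg (mul_nonneg hA0 hB0) (sq_nonneg ((4:ℝ) ^ t))]
end

section
/- Let M ∈ ℕ, let μ₁,…,μ_M ≥ 0, and let ψ₁,…,ψ_M ∈ C^∞(𝕋) be complex-valued smooth functions. Set ρ := Σ_{k=1}^M μ_k |ψ_k|². Then √ρ ∈ H¹(𝕋) and ∫_𝕋 |∇√ρ|² dx ≤ Σ_{k=1}^M μ_k ‖∇ψ_k‖_{L²(𝕋)}². -/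
open Real MeasureTheory Filter

private lemma normSq_hasDerivAt {f : ℝ → ℂ} {f' : ℂ} {x : ℝ} (hf : HasDerivAt f f' x) :
    HasDerivAt (fun t => ‖f t‖ ^ 2) (2 * ((starRingEnd ℂ) (f x) * f').re) x := by
  have hre : HasDerivAt (fun t => (f t).re) f'.re x :=
    (Complex.reCLM.hasFDerivAt.comp_hasDerivAt x hf)
  have him : HasDerivAt (fun t => (f t).im) f'.im x :=
    (Complex.imCLM.hasFDerivAt.comp_hasDerivAt x hf)
  have h := (hre.pow 2).add (him.pow 2)
  have heq : (fun t => (f t).re ^ 2 + (f t).im ^ 2) = fun t => ‖f t‖ ^ 2 := by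
    funext t
    rw [Complex.sq_norm, Complex.normSq_apply]
    ring
  change HasDerivAt (fun t => (f t).re ^ 2 + (f t).im ^ 2) _ x at h
  rw [heq] at h
  convert h using 1
  simp [Complex.mul_re]
  ring

/-- Hoffmann–Ostenhof inequality for a finite-rank system on the circle of length `2π`:
with `ρ = Σ_k μ_k |ψ_k|²`, the square root `√ρ` lies in `H¹(𝕋)` (it is absolutely
continuous with square-integrable weak derivative `w`) and
`∫ |∇√ρ|² ≤ Σ_k μ_k ‖∇ψ_k‖₂²`. -/
theorem stmt_7 (M : ℕ) (μ : Fin M → ℝ) (hμ : ∀ k, 0 ≤ μ k)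
    (ψ : Fin M → ℝ → ℂ)
    (hψ : ∀ k, ContDiff ℝ (⊤ : ℕ∞) (ψ k))
    (hper : ∀ k, Function.Periodic (ψ k) (2 * π)) :
    ∃ w : ℝ → ℝ, Measurable w ∧
      (∀ x : ℝ, Real.sqrt (∑ k, μ k * ‖ψ k x‖ ^ 2)
        = Real.sqrt (∑ k, μ k * ‖ψ k 0‖ ^ 2) + ∫ t in (0:ℝ)..x, w t) ∧
      IntervalIntegrable (fun t => (w t) ^ 2) volume 0 (2 * π) ∧
      (∫ t in (0:ℝ)..(2 * π), (w t) ^ 2)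
        ≤ ∑ k, μ k * ∫ t in (0:ℝ)..(2 * π), ‖deriv (ψ k) t‖ ^ 2 := by
  classical
  set ρ : ℝ → ℝ := fun x => ∑ k, μ k * ‖ψ k x‖ ^ 2 with hρdef
  set D : ℝ → ℝ := fun t => ∑ k, μ k * (2 * ((starRingEnd ℂ) (ψ k t) * deriv (ψ k) t).re)
    with hDdef
  set G : ℝ → ℝ := fun t => ∑ k, μ k * ‖deriv (ψ k) t‖ ^ 2 with hGdef
  have hψd : ∀ k (t : ℝ), HasDerivAt (ψ k) (deriv (ψ k) t) t := fun k t =>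
    (((hψ k).differentiable (by simp)) t).hasDerivAt
  have hψdc : ∀ k, Continuous (deriv (ψ k)) := fun k => (hψ k).continuous_deriv (by simp)
  have hρd : ∀ t, HasDerivAt ρ (D t) t := by
    intro t
    apply HasDerivAt.fun_sum
    intro k _
    exact (normSq_hasDerivAt (hψd k t)).const_mul (μ k)
  have hρ0 : ∀ t, 0 ≤ ρ t := fun t =>
    Finset.sum_nonneg fun k _ => mul_nonneg (hμ k) (by positivity)
  have hG0 : ∀ t, 0 ≤ G t := fun t =>
    Finset.sum_nonneg fun k _ => mul_nonneg (hμ k) (by positivity)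
  have hcontρ : Continuous ρ := by
    apply continuous_finset_sum
    intro k _
    exact continuous_const.mul (((hψ k).continuous.norm).pow 2)
  have hcontD : Continuous D := by
    apply continuous_finset_sum
    intro k _
    exact continuous_const.mul (continuous_const.mul (Complex.continuous_re.comp
      ((continuous_star.comp (hψ k).continuous).mul (hψdc k))))
  have hcontG : Continuous G := by
    apply continuous_finset_sum
    intro k _
    exact continuous_const.mul (((hψdc k).norm).pow 2)
  -- key Cauchy-Schwarz inequality
  have hkey : ∀ t, D t ^ 2 ≤ 4 * (ρ t * G t) := by
    intro t
    set S : ℝ := ∑ k, (Real.sqrt (μ k) * ‖ψ k t‖) * (Real.sqrt (μ k) * ‖deriv (ψ k) t‖)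
      with hSdef
    have habs : |D t| ≤ 2 * S := by
      calc |D t| ≤ ∑ k, |μ k * (2 * ((starRingEnd ℂ) (ψ k t) * deriv (ψ k) t).re)| :=
            Finset.abs_sum_le_sum_abs _ _
        _ ≤ ∑ k, 2 * ((Real.sqrt (μ k) * ‖ψ k t‖) * (Real.sqrt (μ k) * ‖deriv (ψ k) t‖)) := by
            apply Finset.sum_le_sum
            intro k _
            have h1 : |((starRingEnd ℂ) (ψ k t) * deriv (ψ k) t).re|
                ≤ ‖ψ k t‖ * ‖deriv (ψ k) t‖ := by
              calc |((starRingEnd ℂ) (ψ k t) * deriv (ψ k) t).re|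
                  ≤ ‖(starRingEnd ℂ) (ψ k t) * deriv (ψ k) t‖ :=
                    Complex.abs_re_le_norm _
                _ = ‖ψ k t‖ * ‖deriv (ψ k) t‖ := by
                    rw [norm_mul, Complex.norm_conj]
            rw [abs_mul, abs_of_nonneg (hμ k), abs_mul, abs_two]
            nlinarith [Real.sq_sqrt (hμ k), Real.sqrt_nonneg (μ k), norm_nonneg (ψ k t),
              norm_nonneg (deriv (ψ k) t), abs_nonneg (((starRingEnd ℂ) (ψ k t) * deriv (ψ k) t).re)]
        _ = 2 * S := by rw [hSdef, Finset.mul_sum]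
    have hS2 : S ^ 2 ≤ ρ t * G t := by
      have hCS := Finset.sum_mul_sq_le_sq_mul_sq Finset.univ
        (fun k => Real.sqrt (μ k) * ‖ψ k t‖) (fun k => Real.sqrt (μ k) * ‖deriv (ψ k) t‖)
      have h1 : ∑ k, (Real.sqrt (μ k) * ‖ψ k t‖) ^ 2 = ρ t :=
        Finset.sum_congr rfl fun k _ => by rw [mul_pow, Real.sq_sqrt (hμ k)]
      have h2 : ∑ k, (Real.sqrt (μ k) * ‖deriv (ψ k) t‖) ^ 2 = G t :=
        Finset.sum_congr rfl fun k _ => by rw [mul_pow, Real.sq_sqrt (hμ k)]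
      rw [h1, h2] at hCS
      exact hCS
    have hSnn : 0 ≤ S := Finset.sum_nonneg fun k _ => by positivity
    calc D t ^ 2 = |D t| ^ 2 := (sq_abs _).symm
      _ ≤ (2 * S) ^ 2 := by nlinarith [abs_nonneg (D t)]
      _ = 4 * S ^ 2 := by ring
      _ ≤ 4 * (ρ t * G t) := by linarith
  have hD0 : ∀ t, ρ t = 0 → D t = 0 := by
    intro t ht
    have := hkey t
    rw [ht] at this
    nlinarith [sq_nonneg (D t)]
  set w : ℝ → ℝ := fun t => if ρ t = 0 then 0 else D t / (2 * Real.sqrt (ρ t)) with hwdef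
  have hwsq : ∀ t, w t ^ 2 ≤ G t := by
    intro t
    by_cases h : ρ t = 0
    · simp only [hwdef, if_pos h]
      simpa using hG0 t
    · have hpos : 0 < ρ t := lt_of_le_of_ne (hρ0 t) (Ne.symm h)
      have hsq : Real.sqrt (ρ t) ^ 2 = ρ t := Real.sq_sqrt (hρ0 t)
      have hspos : 0 < Real.sqrt (ρ t) := Real.sqrt_pos.mpr hpos
      simp only [hwdef, if_neg h]
      rw [div_pow, div_le_iff₀ (by positivity)]
      calc D t ^ 2 ≤ 4 * (ρ t * G t) := hkey t
        _ = G t * (2 * Real.sqrt (ρ t)) ^ 2 := by rw [mul_pow]; rw [hsq]; ring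
  have hmw : Measurable w := by
    have hms : MeasurableSet {t : ℝ | ρ t = 0} := (isClosed_eq hcontρ continuous_const).measurableSet
    exact Measurable.ite hms measurable_const
      (hcontD.measurable.div ((continuous_const.mul hcontρ.sqrt).measurable))
  -- FTC part
  have hFTC : ∀ x : ℝ, Real.sqrt (ρ x) = Real.sqrt (ρ 0) + ∫ t in (0:ℝ)..x, w t := by
    intro x
    set F : ℕ → ℝ → ℝ := fun n t => D t / (2 * Real.sqrt (ρ t + 1 / (n + 1))) with hFdef
    have hεpos : ∀ n : ℕ, (0:ℝ) < 1 / (n + 1) := fun n => by positivity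
    have hpos : ∀ (n : ℕ) (t : ℝ), 0 < ρ t + 1 / (n + 1) := fun n t =>
      add_pos_of_nonneg_of_pos (hρ0 t) (hεpos n)
    have hcontF : ∀ n, Continuous (F n) := by
      intro n
      apply hcontD.div (continuous_const.mul (hcontρ.add continuous_const).sqrt)
      intro t
      have := Real.sqrt_pos.mpr (hpos n t)
      exact mul_ne_zero two_ne_zero this.ne'
    have heq : ∀ n : ℕ, ∫ t in (0:ℝ)..x, F n t
        = Real.sqrt (ρ x + 1 / (n + 1)) - Real.sqrt (ρ 0 + 1 / (n + 1)) := by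
      intro n
      apply intervalIntegral.integral_eq_sub_of_hasDerivAt
      · intro t _
        have h1 : HasDerivAt (fun s => ρ s + 1 / (n + 1)) (D t) t := (hρd t).add_const _
        have h2 := (Real.hasDerivAt_sqrt (ne_of_gt (hpos n t))).comp t h1
        exact h2.congr_deriv (by simp only [hFdef]; ring)
      · exact (hcontF n).intervalIntegrable _ _
    have hbound : ∀ (n : ℕ) (t : ℝ), |F n t| ≤ Real.sqrt (G t) := by
      intro n t
      have hsnn : 0 ≤ Real.sqrt (ρ t + 1 / (n + 1)) := Real.sqrt_nonneg _
      have hspos : 0 < Real.sqrt (ρ t + 1 / (n + 1)) := Real.sqrt_pos.mpr (hpos n t)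
      have hD2 : D t ^ 2 ≤ (2 * Real.sqrt (ρ t + 1 / (n + 1)) * Real.sqrt (G t)) ^ 2 := by
        have h1 : Real.sqrt (ρ t + 1 / (n + 1)) ^ 2 = ρ t + 1 / (n + 1) :=
          Real.sq_sqrt (le_of_lt (hpos n t))
        have h2 : Real.sqrt (G t) ^ 2 = G t := Real.sq_sqrt (hG0 t)
        calc D t ^ 2 ≤ 4 * (ρ t * G t) := hkey t
          _ ≤ 4 * ((ρ t + 1 / (n + 1)) * G t) := by nlinarith [hεpos n, hG0 t]
          _ = (2 * Real.sqrt (ρ t + 1 / (n + 1)) * Real.sqrt (G t)) ^ 2 := by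
              rw [mul_pow, mul_pow, h1, h2]; ring
      have hDabs : |D t| ≤ 2 * Real.sqrt (ρ t + 1 / (n + 1)) * Real.sqrt (G t) := by
        have hnn : 0 ≤ 2 * Real.sqrt (ρ t + 1 / (n + 1)) * Real.sqrt (G t) := by positivity
        nlinarith [abs_nonneg (D t), sq_abs (D t)]
      rw [hFdef]
      simp only
      rw [abs_div, abs_of_nonneg (by positivity : (0:ℝ) ≤ 2 * Real.sqrt (ρ t + 1 / (n + 1))),
        div_le_iff₀ (by positivity)]
      calc |D t| ≤ 2 * Real.sqrt (ρ t + 1 / (n + 1)) * Real.sqrt (G t) := hDabs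
        _ = Real.sqrt (G t) * (2 * Real.sqrt (ρ t + 1 / (n + 1))) := by ring
    have hptwise : ∀ t : ℝ, Filter.Tendsto (fun n : ℕ => F n t) Filter.atTop (nhds (w t)) := by
      intro t
      by_cases h : ρ t = 0
      · have hD := hD0 t h
        have : ∀ n : ℕ, F n t = 0 := by intro n; simp [hFdef, hD]
        simp only [this, hwdef, if_pos h]
        exact tendsto_const_nhds
      · have hpos' : 0 < ρ t := lt_of_le_of_ne (hρ0 t) (Ne.symm h)
        have hc : ContinuousAt (fun ε : ℝ => D t / (2 * Real.sqrt (ρ t + ε))) 0 := by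
          apply ContinuousAt.div continuousAt_const
          · exact (continuous_const.mul (continuous_const.add continuous_id).sqrt).continuousAt
          · have := Real.sqrt_pos.mpr (by simpa using hpos' : 0 < ρ t + 0)
            positivity
        have htend : Filter.Tendsto (fun n : ℕ => (1:ℝ) / (n + 1)) Filter.atTop (nhds 0) :=
          tendsto_one_div_add_atTop_nhds_zero_nat
        have := (hc.tendsto).comp htend
        simp only [Function.comp_def, add_zero] at this
        simpa [hFdef, hwdef, if_neg h, one_div] using this
    have hlim1 : Filter.Tendsto (fun n : ℕ => ∫ t in (0:ℝ)..x, F n t) Filter.atTop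
        (nhds (∫ t in (0:ℝ)..x, w t)) := by
      apply intervalIntegral.tendsto_integral_filter_of_dominated_convergence
        (fun t => Real.sqrt (G t))
      · exact Filter.Eventually.of_forall fun n =>
          (hcontF n).aestronglyMeasurable.restrict
      · exact Filter.Eventually.of_forall fun n =>
          Filter.Eventually.of_forall fun t _ => by
            rw [Real.norm_eq_abs]; exact hbound n t
      · exact (hcontG.sqrt).intervalIntegrable _ _
      · exact Filter.Eventually.of_forall fun t _ => hptwise t
    have hlim2 : Filter.Tendsto (fun n : ℕ => ∫ t in (0:ℝ)..x, F n t) Filter.atTop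
        (nhds (Real.sqrt (ρ x) - Real.sqrt (ρ 0))) := by
      simp only [heq]
      have htend : Filter.Tendsto (fun n : ℕ => (1:ℝ) / (n + 1)) Filter.atTop (nhds 0) :=
        tendsto_one_div_add_atTop_nhds_zero_nat
      have h1 : Filter.Tendsto (fun n : ℕ => Real.sqrt (ρ x + 1 / (n + 1))) Filter.atTop
          (nhds (Real.sqrt (ρ x))) := by
        have := (Real.continuous_sqrt.continuousAt (x := ρ x)).tendsto.comp
          (by simpa using (tendsto_const_nhds (x := ρ x)).add htend)
        simpa [Function.comp_def] using this
      have h2 : Filter.Tendsto (fun n : ℕ => Real.sqrt (ρ 0 + 1 / (n + 1))) Filter.atTop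
          (nhds (Real.sqrt (ρ 0))) := by
        have := (Real.continuous_sqrt.continuousAt (x := ρ 0)).tendsto.comp
          (by simpa using (tendsto_const_nhds (x := ρ 0)).add htend)
        simpa [Function.comp_def] using this
      exact h1.sub h2
    have := tendsto_nhds_unique hlim1 hlim2
    linarith [this]
  -- integrability and bound
  have hint : IntervalIntegrable (fun t => w t ^ 2) volume 0 (2 * π) := by
    apply IntervalIntegrable.mono_fun' (hcontG.intervalIntegrable 0 (2 * π))
    · exact ((hmw.pow_const 2).aestronglyMeasurable)
    · exact Filter.Eventually.of_forall fun t => by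
        simpa [abs_of_nonneg (sq_nonneg (w t))] using hwsq t
  have hGeq : (∫ t in (0:ℝ)..(2 * π), G t)
      = ∑ k, μ k * ∫ t in (0:ℝ)..(2 * π), ‖deriv (ψ k) t‖ ^ 2 := by
    rw [hGdef]
    rw [intervalIntegral.integral_finset_sum (f := fun k t => μ k * ‖deriv (ψ k) t‖ ^ 2) (fun k _ =>
      ((continuous_const.mul (((hψdc k).norm).pow 2)).intervalIntegrable _ _ :
        IntervalIntegrable (fun t => μ k * ‖deriv (ψ k) t‖ ^ 2) volume _ _))]
    exact Finset.sum_congr rfl fun k _ => intervalIntegral.integral_const_mul _ _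
  refine ⟨w, hmw, hFTC, hint, ?_⟩
  rw [← hGeq]
  exact intervalIntegral.integral_mono_on (by positivity) hint
    (hcontG.intervalIntegrable _ _) (fun t _ => hwsq t)
end

section
/- Let M ∈ ℕ, let μ₁,…,μ_M ≥ 0, and let ψ₁,…,ψ_M ∈ C^∞(𝕋). Set ρ := Σ_{k=1}^M μ_k |ψ_k|², 𝑀 := ∫_𝕋 ρ dx, and K := Σ_{k=1}^M μ_k ‖∇ψ_k‖_{L²(𝕋)}². Then ‖ρ‖_{L²(𝕋)}² ≤ 𝑀²/(2π) + 2 𝑀^{3/2} √K. -/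
open Real MeasureTheory

/-- Cauchy–Schwarz for interval integrals of continuous functions. -/
lemma cs_interval {f g : ℝ → ℝ} (hf : Continuous f) (hg : Continuous g) {a b : ℝ}
    (hab : a ≤ b) :
    (∫ x in a..b, f x * g x)
      ≤ Real.sqrt (∫ x in a..b, f x ^ 2) * Real.sqrt (∫ x in a..b, g x ^ 2) := by
  set A := ∫ x in a..b, f x ^ 2 with hA
  set B := ∫ x in a..b, f x * g x with hB
  set C := ∫ x in a..b, g x ^ 2 with hC
  have hA0 : 0 ≤ A := intervalIntegral.integral_nonneg hab fun u _ => sq_nonneg _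
  have hC0 : 0 ≤ C := intervalIntegral.integral_nonneg hab fun u _ => sq_nonneg _
  have hkey : ∀ t : ℝ, 0 ≤ C * (t * t) + -(2 * B) * t + A := by
    intro t
    have h0 : 0 ≤ ∫ x in a..b, (t * g x - f x) ^ 2 :=
      intervalIntegral.integral_nonneg hab fun u _ => sq_nonneg _
    have hone : (fun x => (t * g x - f x) ^ 2)
        = fun x => ((t * t) * g x ^ 2 - (2 * t) * (f x * g x)) + f x ^ 2 := by
      funext x; ring
    have hi1 : IntervalIntegrable (fun x => (t * t) * g x ^ 2) volume a b :=
      (continuous_const.mul (hg.pow 2)).intervalIntegrable _ _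
    have hi2 : IntervalIntegrable (fun x => (2 * t) * (f x * g x)) volume a b :=
      (continuous_const.mul (hf.mul hg)).intervalIntegrable _ _
    have hi3 : IntervalIntegrable (fun x => f x ^ 2) volume a b :=
      ((hf.pow 2)).intervalIntegrable _ _
    rw [hone, intervalIntegral.integral_add (hi1.sub hi2) hi3,
      intervalIntegral.integral_sub hi1 hi2, intervalIntegral.integral_const_mul,
      intervalIntegral.integral_const_mul] at h0
    rw [← hA, ← hB, ← hC] at h0
    nlinarith [h0]
  have hd := discrim_le_zero hkey
  rw [discrim] at hd
  have hB2 : B ^ 2 ≤ A * C := by nlinarith [hd]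
  calc B ≤ |B| := le_abs_self B
    _ = Real.sqrt (B ^ 2) := (Real.sqrt_sq_eq_abs B).symm
    _ ≤ Real.sqrt (A * C) := Real.sqrt_le_sqrt hB2
    _ = Real.sqrt A * Real.sqrt C := Real.sqrt_mul hA0 _

/-- The key analytic estimate: if `ρ ≥ 0` has continuous derivative `D` with
`|D| ≤ 2 √ρ √g`, then `∫ ρ² ≤ (∫ρ)²/T + 2 √(∫ρ)³ √(∫g)`. -/
lemma key_bound {T : ℝ} (hT : 0 < T) {ρ D g : ℝ → ℝ}
    (hρc : Continuous ρ) (hDc : Continuous D) (hgc : Continuous g)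
    (hρ0 : ∀ x, 0 ≤ ρ x) (hg0 : ∀ x, 0 ≤ g x)
    (hderiv : ∀ x, HasDerivAt ρ (D x) x)
    (hDle : ∀ x, |D x| ≤ 2 * (Real.sqrt (ρ x) * Real.sqrt (g x))) :
    (∫ x in (0:ℝ)..T, ρ x ^ 2)
      ≤ (∫ x in (0:ℝ)..T, ρ x) ^ 2 / T
        + 2 * Real.sqrt (∫ x in (0:ℝ)..T, ρ x) ^ 3 * Real.sqrt (∫ x in (0:ℝ)..T, g x) := by
  set m := ∫ x in (0:ℝ)..T, ρ x with hm
  set G := ∫ x in (0:ℝ)..T, g x with hG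
  set I := ∫ x in (0:ℝ)..T, |D x| with hI
  have hm0 : 0 ≤ m := intervalIntegral.integral_nonneg hT.le fun u _ => hρ0 u
  have hG0 : 0 ≤ G := intervalIntegral.integral_nonneg hT.le fun u _ => hg0 u
  have hI0 : 0 ≤ I := intervalIntegral.integral_nonneg hT.le fun u _ => abs_nonneg _
  -- a point where ρ attains its minimum on [0, T]
  obtain ⟨y, hy, hmin⟩ := isCompact_Icc.exists_isMinOn (α := ℝ) (s := Set.Icc (0:ℝ) T)
    ⟨0, Set.left_mem_Icc.2 hT.le⟩ hρc.continuousOn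
  have hymT : ρ y * T ≤ m := by
    have h1 : (∫ _x in (0:ℝ)..T, ρ y) ≤ m :=
      intervalIntegral.integral_mono_on hT.le intervalIntegrable_const
        (hρc.intervalIntegrable _ _) fun x hx => hmin hx
    simpa [mul_comm] using h1
  have hydiv : ρ y ≤ m / T := (le_div_iff₀ hT).2 hymT
  -- pointwise bound via FTC
  have hptw : ∀ x ∈ Set.Icc (0:ℝ) T, ρ x ≤ m / T + I := by
    intro x hx
    have hftc : (∫ t in y..x, D t) = ρ x - ρ y :=
      intervalIntegral.integral_eq_sub_of_hasDerivAt (fun t _ => hderiv t)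
        (hDc.intervalIntegrable _ _)
    have hsub : Set.uIoc y x ⊆ Set.uIoc 0 T := by
      rw [Set.uIoc_of_le hT.le, Set.uIoc]
      exact Set.Ioc_subset_Ioc (le_min hy.1 hx.1) (max_le hy.2 hx.2)
    have habs : |(∫ t in y..x, D t)| ≤ I := by
      calc |(∫ t in y..x, D t)| ≤ |(∫ t in y..x, |D t|)| := by
            simpa [Real.norm_eq_abs] using
              intervalIntegral.norm_integral_le_abs_integral_norm (f := D) (a := y) (b := x)
        _ ≤ |(∫ t in (0:ℝ)..T, |D t|)| :=
            intervalIntegral.abs_integral_mono_interval hsub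
              (Filter.Eventually.of_forall fun t => abs_nonneg _)
              (hDc.abs.intervalIntegrable _ _)
        _ = I := abs_of_nonneg hI0
    have h2 : ρ x - ρ y ≤ I := by rw [← hftc]; exact (le_abs_self _).trans habs
    linarith
  -- step 1 : ∫ ρ² ≤ (m/T + I) * m
  have step1 : (∫ x in (0:ℝ)..T, ρ x ^ 2) ≤ (m / T + I) * m := by
    have h1 : (∫ x in (0:ℝ)..T, ρ x ^ 2) ≤ ∫ x in (0:ℝ)..T, (m / T + I) * ρ x := by
      refine intervalIntegral.integral_mono_on hT.le ((hρc.pow 2).intervalIntegrable _ _)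
        ((continuous_const.mul hρc).intervalIntegrable _ _) fun x hx => ?_
      have := hptw x hx
      nlinarith [hρ0 x]
    rwa [intervalIntegral.integral_const_mul] at h1
  -- step 2 : I ≤ 2 √m √G
  have step2 : I ≤ 2 * (Real.sqrt m * Real.sqrt G) := by
    have h1 : I ≤ ∫ x in (0:ℝ)..T, 2 * (Real.sqrt (ρ x) * Real.sqrt (g x)) := by
      refine intervalIntegral.integral_mono_on hT.le (hDc.abs.intervalIntegrable _ _)
        ((continuous_const.mul (hρc.sqrt.mul hgc.sqrt)).intervalIntegrable _ _) fun x _ => hDle x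
    have h2 : (∫ x in (0:ℝ)..T, 2 * (Real.sqrt (ρ x) * Real.sqrt (g x)))
        = 2 * ∫ x in (0:ℝ)..T, Real.sqrt (ρ x) * Real.sqrt (g x) :=
      intervalIntegral.integral_const_mul _ _
    have h3 : (∫ x in (0:ℝ)..T, Real.sqrt (ρ x) * Real.sqrt (g x))
        ≤ Real.sqrt (∫ x in (0:ℝ)..T, Real.sqrt (ρ x) ^ 2)
          * Real.sqrt (∫ x in (0:ℝ)..T, Real.sqrt (g x) ^ 2) :=
      cs_interval hρc.sqrt hgc.sqrt hT.le
    have h4 : (∫ x in (0:ℝ)..T, Real.sqrt (ρ x) ^ 2) = m :=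
      intervalIntegral.integral_congr fun x _ => Real.sq_sqrt (hρ0 x)
    have h5 : (∫ x in (0:ℝ)..T, Real.sqrt (g x) ^ 2) = G :=
      intervalIntegral.integral_congr fun x _ => Real.sq_sqrt (hg0 x)
    rw [h4, h5] at h3
    linarith
  have hs3 : Real.sqrt m ^ 3 = m * Real.sqrt m := by
    rw [pow_succ, Real.sq_sqrt hm0]
  calc (∫ x in (0:ℝ)..T, ρ x ^ 2) ≤ (m / T + I) * m := step1
    _ = m ^ 2 / T + I * m := by ring
    _ ≤ m ^ 2 / T + 2 * (Real.sqrt m * Real.sqrt G) * m := by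
        have := mul_le_mul_of_nonneg_right step2 hm0
        linarith
    _ = m ^ 2 / T + 2 * Real.sqrt m ^ 3 * Real.sqrt G := by rw [hs3]; ring

/-- GN + Hoffmann–Ostenhof estimate for a finite-rank system on the circle of length
`2π`: with `ρ = Σ_k μ_k |ψ_k|²`, `𝑀 = ∫ ρ`, `K = Σ_k μ_k ‖∇ψ_k‖₂²`, one has
`‖ρ‖₂² ≤ 𝑀²/(2π) + 2 𝑀^{3/2} √K`. -/
theorem stmt_8 (M : ℕ) (μ : Fin M → ℝ) (hμ : ∀ k, 0 ≤ μ k)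
    (ψ : Fin M → ℝ → ℂ)
    (hψ : ∀ k, ContDiff ℝ (⊤ : ℕ∞) (ψ k))
    (hper : ∀ k, Function.Periodic (ψ k) (2 * π)) :
    (∫ x in (0:ℝ)..(2 * π), (∑ k, μ k * ‖ψ k x‖ ^ 2) ^ 2)
      ≤ (∫ x in (0:ℝ)..(2 * π), ∑ k, μ k * ‖ψ k x‖ ^ 2) ^ 2 / (2 * π)
        + 2 * Real.sqrt (∫ x in (0:ℝ)..(2 * π), ∑ k, μ k * ‖ψ k x‖ ^ 2) ^ 3
            * Real.sqrt (∑ k, μ k * ∫ x in (0:ℝ)..(2 * π), ‖deriv (ψ k) x‖ ^ 2) := by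
  have hT : (0:ℝ) < 2 * π := by positivity
  have hψc : ∀ k, Continuous (ψ k) := fun k => (hψ k).continuous
  have hψ'c : ∀ k, Continuous (deriv (ψ k)) := fun k => (hψ k).continuous_deriv (by simp)
  have hψd : ∀ k x, HasDerivAt (ψ k) (deriv (ψ k) x) x := fun k x =>
    (((hψ k).differentiable (by simp)) x).hasDerivAt
  set ρ : ℝ → ℝ := fun x => ∑ k, μ k * ‖ψ k x‖ ^ 2 with hρdef
  set g : ℝ → ℝ := fun x => ∑ k, μ k * ‖deriv (ψ k) x‖ ^ 2 with hgdef
  set D : ℝ → ℝ := fun x =>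
    ∑ k, μ k * (deriv (ψ k) x * star (ψ k x) + ψ k x * star (deriv (ψ k) x)).re with hDdef
  have hρc : Continuous ρ := continuous_finset_sum _ fun k _ =>
    continuous_const.mul ((hψc k).norm.pow 2)
  have hgc : Continuous g := continuous_finset_sum _ fun k _ =>
    continuous_const.mul ((hψ'c k).norm.pow 2)
  have hDc : Continuous D := continuous_finset_sum _ fun k _ =>
    continuous_const.mul (Complex.continuous_re.comp
      (((hψ'c k).mul (hψc k).star).add ((hψc k).mul (hψ'c k).star)))
  have hρ0 : ∀ x, 0 ≤ ρ x := fun x =>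
    Finset.sum_nonneg fun k _ => mul_nonneg (hμ k) (by positivity)
  have hg0 : ∀ x, 0 ≤ g x := fun x =>
    Finset.sum_nonneg fun k _ => mul_nonneg (hμ k) (by positivity)
  have hρD : ∀ x, HasDerivAt ρ (D x) x := by
    intro x
    refine HasDerivAt.fun_sum fun k _ => ?_
    have h3 := (hψd k x).mul (hψd k x).star
    have h4 := Complex.reCLM.hasFDerivAt.comp_hasDerivAt x h3
    have h5 := h4.const_mul (μ k)
    have heq : (fun t => μ k * ‖ψ k t‖ ^ 2)
        = fun t => μ k * Complex.reCLM (ψ k t * star (ψ k t)) := by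
      funext t
      simp [Complex.star_def, Complex.mul_conj, Complex.normSq_eq_norm_sq,
        ← Complex.ofReal_pow, Complex.ofReal_re]
    rw [heq]
    simpa [Function.comp] using h5
  have hDle : ∀ x, |D x| ≤ 2 * (Real.sqrt (ρ x) * Real.sqrt (g x)) := by
    intro x
    have h1 : ∀ k, |(deriv (ψ k) x * star (ψ k x) + ψ k x * star (deriv (ψ k) x)).re|
        ≤ 2 * (‖ψ k x‖ * ‖deriv (ψ k) x‖) := by
      intro k
      calc |(deriv (ψ k) x * star (ψ k x) + ψ k x * star (deriv (ψ k) x)).re|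
          ≤ ‖deriv (ψ k) x * star (ψ k x) + ψ k x * star (deriv (ψ k) x)‖ :=
            Complex.abs_re_le_norm _
        _ ≤ ‖deriv (ψ k) x * star (ψ k x)‖ + ‖ψ k x * star (deriv (ψ k) x)‖ := norm_add_le _ _
        _ = 2 * (‖ψ k x‖ * ‖deriv (ψ k) x‖) := by
            rw [norm_mul, norm_mul, norm_star, norm_star]; ring
    have h2 : |D x| ≤ ∑ k, μ k * (2 * (‖ψ k x‖ * ‖deriv (ψ k) x‖)) := by
      refine (Finset.abs_sum_le_sum_abs _ _).trans (Finset.sum_le_sum fun k _ => ?_)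
      rw [abs_mul, abs_of_nonneg (hμ k)]
      exact mul_le_mul_of_nonneg_left (h1 k) (hμ k)
    set a : Fin M → ℝ := fun k => Real.sqrt (μ k) * ‖ψ k x‖ with ha
    set b : Fin M → ℝ := fun k => Real.sqrt (μ k) * ‖deriv (ψ k) x‖ with hb
    have h3 : (∑ k, μ k * (2 * (‖ψ k x‖ * ‖deriv (ψ k) x‖))) = 2 * ∑ k, a k * b k := by
      rw [Finset.mul_sum]
      refine Finset.sum_congr rfl fun k _ => ?_
      have h := Real.mul_self_sqrt (hμ k)
      simp only [ha, hb]
      linear_combination (-2 * (‖ψ k x‖ * ‖deriv (ψ k) x‖)) * h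
    have h4 : (∑ k, a k * b k) ≤ Real.sqrt (ρ x) * Real.sqrt (g x) := by
      have hcs := Finset.sum_mul_sq_le_sq_mul_sq Finset.univ a b
      have h0 : 0 ≤ ∑ k, a k * b k :=
        Finset.sum_nonneg fun k _ => mul_nonneg
          (mul_nonneg (Real.sqrt_nonneg _) (norm_nonneg _))
          (mul_nonneg (Real.sqrt_nonneg _) (norm_nonneg _))
      have hsa : (∑ k, a k ^ 2) = ρ x := by
        refine Finset.sum_congr rfl fun k _ => ?_
        simp only [ha]
        rw [mul_pow, Real.sq_sqrt (hμ k)]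
      have hsb : (∑ k, b k ^ 2) = g x := by
        refine Finset.sum_congr rfl fun k _ => ?_
        simp only [hb]
        rw [mul_pow, Real.sq_sqrt (hμ k)]
      calc (∑ k, a k * b k) = Real.sqrt ((∑ k, a k * b k) ^ 2) := (Real.sqrt_sq h0).symm
        _ ≤ Real.sqrt ((∑ k, a k ^ 2) * ∑ k, b k ^ 2) := Real.sqrt_le_sqrt hcs
        _ = Real.sqrt (ρ x) * Real.sqrt (g x) := by
            rw [hsa, hsb, Real.sqrt_mul (hρ0 x)]
    calc |D x| ≤ ∑ k, μ k * (2 * (‖ψ k x‖ * ‖deriv (ψ k) x‖)) := h2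
      _ = 2 * ∑ k, a k * b k := h3
      _ ≤ 2 * (Real.sqrt (ρ x) * Real.sqrt (g x)) := by linarith
  have hKeq : (∑ k, μ k * ∫ x in (0:ℝ)..(2 * π), ‖deriv (ψ k) x‖ ^ 2)
      = ∫ x in (0:ℝ)..(2 * π), g x := by
    rw [hgdef]
    rw [intervalIntegral.integral_finset_sum (f := fun k x => μ k * ‖deriv (ψ k) x‖ ^ 2) (fun k _ =>
      (continuous_const.mul ((hψ'c k).norm.pow 2)).intervalIntegrable _ _)]
    exact Finset.sum_congr rfl fun k _ =>
      (intervalIntegral.integral_const_mul _ _).symm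
  rw [hKeq]
  exact key_bound hT hρc hDc hgc hρ0 hg0 hρD hDle
end

section
/- Let p, q ∈ ℝ with pq > 0 (focusing case, p ≠ 0). Let M ∈ ℕ, μ₁,…,μ_M ≥ 0, ψ₁,…,ψ_M ∈ C^∞(𝕋), and set ρ := Σ_k μ_k |ψ_k|², 𝑀 := ∫_𝕋 ρ dx, K := Σ_k μ_k ‖∇ψ_k‖_{L²}², and E := −p K + (q/2) ‖ρ‖_{L²}². Then K ≤ (1/4)(A + √(A² + 4B))², where A := |q| 𝑀^{3/2}/|p| and B := |E|/|p| + |q| 𝑀²/(4π |p|). -/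
open Real MeasureTheory

lemma quad_bound_aux (A B K : ℝ) (hB : 0 ≤ B) (hK : 0 ≤ K)
    (h : K ≤ B + A * Real.sqrt K) :
    K ≤ (1 / 4) * (A + Real.sqrt (A ^ 2 + 4 * B)) ^ 2 := by
  set s := Real.sqrt K with hs
  have hs0 : 0 ≤ s := Real.sqrt_nonneg K
  have hs2 : s ^ 2 = K := Real.sq_sqrt hK
  set r := Real.sqrt (A ^ 2 + 4 * B) with hr
  have hr0 : 0 ≤ r := Real.sqrt_nonneg _
  have hr2 : r ^ 2 = A ^ 2 + 4 * B := Real.sq_sqrt (by positivity)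
  nlinarith [sq_nonneg (2 * s - A), sq_nonneg (2 * s - A - r), sq_nonneg (2 * s - A + r),
    mul_nonneg hs0 hr0, sq_nonneg (A + r)]

lemma sup_bound_aux (ρ ρd : ℝ → ℝ) (hd : ∀ x, HasDerivAt ρ (ρd x) x) (hc : Continuous ρd)
    (x : ℝ) (hx : x ∈ Set.Icc 0 (2 * π)) :
    ρ x ≤ (∫ t in (0:ℝ)..(2 * π), ρ t) / (2 * π) + ∫ t in (0:ℝ)..(2 * π), |ρd t| := by
  have hπ : (0:ℝ) < 2 * π := by positivity
  have hρc : Continuous ρ := by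
    rw [continuous_iff_continuousAt]; exact fun t => (hd t).continuousAt
  obtain ⟨y, hy, hmin⟩ := isCompact_Icc.exists_isMinOn (Set.nonempty_Icc.2 hπ.le)
    (hρc.continuousOn (s := Set.Icc 0 (2 * π)))
  have habs_int : IntervalIntegrable (fun t => |ρd t|) volume 0 (2 * π) :=
    (hc.abs).intervalIntegrable _ _
  have h1 : ρ y * (2 * π) ≤ ∫ t in (0:ℝ)..(2 * π), ρ t := by
    have := intervalIntegral.integral_mono_on hπ.le
      (intervalIntegrable_const (μ := volume) (c := ρ y)) (hρc.intervalIntegrable _ _)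
      (fun t ht => hmin ht)
    simpa [mul_comm] using this
  have h2 : ρ x - ρ y = ∫ t in y..x, ρd t := by
    rw [intervalIntegral.integral_eq_sub_of_hasDerivAt (fun t _ => hd t)
      ((hc.intervalIntegrable _ _))]
  have h3 : ∫ t in y..x, ρd t ≤ ∫ t in (0:ℝ)..(2 * π), |ρd t| := by
    rcases le_total y x with hyx | hxy
    · calc ∫ t in y..x, ρd t ≤ ∫ t in y..x, |ρd t| :=
            intervalIntegral.integral_mono_on hyx (hc.intervalIntegrable _ _)
              (hc.abs.intervalIntegrable _ _) (fun t _ => le_abs_self _)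
        _ ≤ ∫ t in (0:ℝ)..(2 * π), |ρd t| :=
            intervalIntegral.integral_mono_interval hy.1 hyx hx.2
              (Filter.Eventually.of_forall (fun t => abs_nonneg _)) habs_int
    · have : ∫ t in y..x, ρd t = -∫ t in x..y, ρd t := by
        rw [intervalIntegral.integral_symm]
      rw [this]
      calc -∫ t in x..y, ρd t = ∫ t in x..y, -ρd t := by
            rw [intervalIntegral.integral_neg]
        _ ≤ ∫ t in x..y, |ρd t| :=
            intervalIntegral.integral_mono_on hxy ((hc.neg).intervalIntegrable _ _)
              (hc.abs.intervalIntegrable _ _) (fun t _ => neg_le_abs _)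
        _ ≤ ∫ t in (0:ℝ)..(2 * π), |ρd t| :=
            intervalIntegral.integral_mono_interval hx.1 hxy hy.2
              (Filter.Eventually.of_forall (fun t => abs_nonneg _)) habs_int
  have hy' : ρ y ≤ (∫ t in (0:ℝ)..(2 * π), ρ t) / (2 * π) := by
    rw [le_div_iff₀ hπ]; linarith
  linarith [h2, h3, hy']

lemma normsq_eq_aux (z : ℂ) : ‖z‖ ^ 2 = z.re ^ 2 + z.im ^ 2 := by
  rw [Complex.sq_norm, Complex.normSq_apply]; ring

lemma hasDeriv_normsq_aux (ψ : ℝ → ℂ) (hψ : ContDiff ℝ (⊤ : ℕ∞) ψ) (x : ℝ) :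
    HasDerivAt (fun t => ‖ψ t‖ ^ 2)
      (2 * ((ψ x).re * (deriv ψ x).re + (ψ x).im * (deriv ψ x).im)) x := by
  have hψd : HasDerivAt ψ (deriv ψ x) x :=
    ((hψ.differentiable (by simp)) x).hasDerivAt
  have hre : HasDerivAt (fun t => (ψ t).re) (deriv ψ x).re x :=
    (Complex.reCLM.hasFDerivAt.comp_hasDerivAt x hψd)
  have him : HasDerivAt (fun t => (ψ t).im) (deriv ψ x).im x :=
    (Complex.imCLM.hasFDerivAt.comp_hasDerivAt x hψd)
  have key : HasDerivAt (fun t => (ψ t).re ^ 2 + (ψ t).im ^ 2)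
      (2 * ((ψ x).re * (deriv ψ x).re + (ψ x).im * (deriv ψ x).im)) x := by
    have : HasDerivAt (fun t => (ψ t).re ^ 2 + (ψ t).im ^ 2) _ x := (hre.pow 2).add (him.pow 2)
    convert this using 1; ring
  have heq : (fun t => ‖ψ t‖ ^ 2) = fun t => (ψ t).re ^ 2 + (ψ t).im ^ 2 := by
    funext t; exact normsq_eq_aux _
  rw [heq]; exact key

lemma ptwise_aux (ε u v a b : ℝ) (hε : 0 < ε) :
    |2 * (u * a + v * b)| ≤ ε * (u ^ 2 + v ^ 2) + (1 / ε) * (a ^ 2 + b ^ 2) := by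
  have h : |2 * (u * a + v * b)| * ε ≤ ε ^ 2 * (u ^ 2 + v ^ 2) + (a ^ 2 + b ^ 2) := by
    rcases abs_cases (2 * (u * a + v * b)) with ⟨h1, _⟩ | ⟨h1, _⟩ <;> rw [h1] <;>
      nlinarith [sq_nonneg (ε * u - a), sq_nonneg (ε * u + a), sq_nonneg (ε * v - b),
        sq_nonneg (ε * v + b)]
  rw [show ε * (u ^ 2 + v ^ 2) + (1 / ε) * (a ^ 2 + b ^ 2)
      = (ε ^ 2 * (u ^ 2 + v ^ 2) + (a ^ 2 + b ^ 2)) / ε by field_simp,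
    le_div_iff₀ hε]
  exact h

/-- Static a priori kinetic-energy bound in the focusing case `pq > 0`: with
`ρ = Σ_k μ_k |ψ_k|²`, mass `𝑀 = ∫ ρ`, kinetic energy `K = Σ_k μ_k ‖∇ψ_k‖₂²` and energy
`E = −pK + (q/2)‖ρ‖₂²`, one has `K ≤ (1/4)(A + √(A²+4B))²` where
`A = |q| 𝑀^{3/2}/|p|` and `B = |E|/|p| + |q| 𝑀²/(4π|p|)`. -/
theorem stmt_9 (p q : ℝ) (hpq : 0 < p * q)
    (M : ℕ) (μ : Fin M → ℝ) (hμ : ∀ k, 0 ≤ μ k)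
    (ψ : Fin M → ℝ → ℂ)
    (hψ : ∀ k, ContDiff ℝ (⊤ : ℕ∞) (ψ k))
    (hper : ∀ k, Function.Periodic (ψ k) (2 * π))
    (mass K E A B : ℝ)
    (hmass : mass = ∫ x in (0:ℝ)..(2 * π), ∑ k, μ k * ‖ψ k x‖ ^ 2)
    (hK : K = ∑ k, μ k * ∫ x in (0:ℝ)..(2 * π), ‖deriv (ψ k) x‖ ^ 2)
    (hE : E = -p * K + (q / 2) * ∫ x in (0:ℝ)..(2 * π), (∑ k, μ k * ‖ψ k x‖ ^ 2) ^ 2)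
    (hA : A = |q| * Real.sqrt mass ^ 3 / |p|)
    (hB : B = |E| / |p| + |q| * mass ^ 2 / (4 * π * |p|)) :
    K ≤ (1 / 4) * (A + Real.sqrt (A ^ 2 + 4 * B)) ^ 2 := by
  have hπ : (0:ℝ) < 2 * π := by positivity
  have hp0 : p ≠ 0 := fun h => by simp [h] at hpq
  have hpabs : (0:ℝ) < |p| := abs_pos.2 hp0
  -- local functions
  set ρ : ℝ → ℝ := fun x => ∑ k, μ k * ‖ψ k x‖ ^ 2 with hρdef
  set σ : ℝ → ℝ := fun x => ∑ k, μ k * ‖deriv (ψ k) x‖ ^ 2 with hσdef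
  set ρd : ℝ → ℝ := fun x => ∑ k, μ k *
      (2 * ((ψ k x).re * (deriv (ψ k) x).re + (ψ k x).im * (deriv (ψ k) x).im)) with hρddef
  have hψc : ∀ k, Continuous (ψ k) := fun k => (hψ k).continuous
  have hψdc : ∀ k, Continuous (deriv (ψ k)) := fun k => (hψ k).continuous_deriv (by simp)
  have hρc : Continuous ρ := by
    rw [hρdef]
    exact continuous_finset_sum _ fun k _ => continuous_const.mul (((hψc k).norm).pow 2)
  have hσc : Continuous σ := by
    rw [hσdef]
    exact continuous_finset_sum _ fun k _ => continuous_const.mul (((hψdc k).norm).pow 2)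
  have hρdc : Continuous ρd := by
    rw [hρddef]
    refine continuous_finset_sum _ fun k _ => continuous_const.mul (continuous_const.mul ?_)
    exact ((Complex.continuous_re.comp (hψc k)).mul
        (Complex.continuous_re.comp (hψdc k))).add
      ((Complex.continuous_im.comp (hψc k)).mul (Complex.continuous_im.comp (hψdc k)))
  have hρ0 : ∀ x, 0 ≤ ρ x := fun x =>
    Finset.sum_nonneg fun k _ => mul_nonneg (hμ k) (by positivity)
  have hσ0 : ∀ x, 0 ≤ σ x := fun x =>
    Finset.sum_nonneg fun k _ => mul_nonneg (hμ k) (by positivity)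
  have hρderiv : ∀ x, HasDerivAt ρ (ρd x) x := by
    intro x
    rw [hρdef, hρddef]
    exact HasDerivAt.fun_sum fun k _ =>
      ((hasDeriv_normsq_aux (ψ k) (hψ k) x).const_mul (μ k))
  -- mass and K as integrals
  have hmass' : mass = ∫ x in (0:ℝ)..(2 * π), ρ x := hmass
  have hKσ : (∫ x in (0:ℝ)..(2 * π), σ x) = K := by
    rw [hK, hσdef]
    rw [intervalIntegral.integral_finset_sum]
    · exact Finset.sum_congr rfl fun k _ => intervalIntegral.integral_const_mul _ _
    · exact fun k _ => (continuous_const.mul (((hψdc k).norm).pow 2)).intervalIntegrable _ _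
  have hmass0 : 0 ≤ mass := by
    rw [hmass']
    exact intervalIntegral.integral_nonneg hπ.le fun x _ => hρ0 x
  have hK0 : 0 ≤ K := by
    rw [← hKσ]
    exact intervalIntegral.integral_nonneg hπ.le fun x _ => hσ0 x
  set I2 : ℝ := ∫ x in (0:ℝ)..(2 * π), (ρ x) ^ 2 with hI2def
  have hI20 : 0 ≤ I2 := intervalIntegral.integral_nonneg hπ.le fun x _ => by positivity
  -- pointwise bound on |ρd|
  have hptw : ∀ ε : ℝ, 0 < ε → ∀ x, |ρd x| ≤ ε * ρ x + (1 / ε) * σ x := by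
    intro ε hε x
    have h1 : |ρd x| ≤ ∑ k, μ k *
        (ε * ‖ψ k x‖ ^ 2 + (1 / ε) * ‖deriv (ψ k) x‖ ^ 2) := by
      rw [hρddef]
      refine le_trans (Finset.abs_sum_le_sum_abs _ _) (Finset.sum_le_sum fun k _ => ?_)
      rw [abs_mul, abs_of_nonneg (hμ k)]
      refine mul_le_mul_of_nonneg_left ?_ (hμ k)
      rw [normsq_eq_aux (ψ k x), normsq_eq_aux (deriv (ψ k) x)]
      exact ptwise_aux ε _ _ _ _ hε
    refine h1.trans (le_of_eq ?_)
    rw [hρdef, hσdef]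
    simp only [Finset.mul_sum]
    rw [← Finset.sum_add_distrib]
    exact Finset.sum_congr rfl fun k _ => by ring
  -- the key integral bound, for every ε > 0
  have hI2bound : ∀ ε : ℝ, 0 < ε →
      I2 ≤ (mass / (2 * π) + (ε * mass + (1 / ε) * K)) * mass := by
    intro ε hε
    have hIρd : (∫ t in (0:ℝ)..(2 * π), |ρd t|) ≤ ε * mass + (1 / ε) * K := by
      have hmono := intervalIntegral.integral_mono_on hπ.le
        (hρdc.abs.intervalIntegrable (μ := volume) 0 (2 * π))
        (((continuous_const.mul hρc).add (continuous_const.mul hσc)).intervalIntegrable (μ := volume) 0 (2 * π))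
        (fun t _ => hptw ε hε t)
      calc (∫ t in (0:ℝ)..(2 * π), |ρd t|)
          ≤ ∫ t in (0:ℝ)..(2 * π), (ε * ρ t + (1 / ε) * σ t) := hmono
        _ = ε * mass + (1 / ε) * K := by
            rw [intervalIntegral.integral_add (f := fun t => ε * ρ t) (g := fun t => (1 / ε) * σ t)
              ((continuous_const.mul hρc).intervalIntegrable _ _)
              ((continuous_const.mul hσc).intervalIntegrable _ _),
              intervalIntegral.integral_const_mul, intervalIntegral.integral_const_mul,
              ← hmass', hKσ]
    set C : ℝ := mass / (2 * π) + ∫ t in (0:ℝ)..(2 * π), |ρd t| with hCdef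
    have hsup : ∀ x ∈ Set.Icc (0:ℝ) (2 * π), ρ x ≤ C := by
      intro x hx
      rw [hCdef, hmass']
      exact sup_bound_aux ρ ρd hρderiv hρdc x hx
    have hI2C : I2 ≤ C * mass := by
      have hmono := intervalIntegral.integral_mono_on hπ.le
        ((hρc.pow 2).intervalIntegrable (μ := volume) 0 (2 * π))
        ((continuous_const.mul hρc).intervalIntegrable (μ := volume) 0 (2 * π))
        (fun t ht => by
          have : ρ t * ρ t ≤ C * ρ t := mul_le_mul_of_nonneg_right (hsup t ht) (hρ0 t)
          calc ρ t ^ 2 = ρ t * ρ t := sq (ρ t) ▸ by ring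
            _ ≤ C * ρ t := this)
      calc I2 ≤ ∫ t in (0:ℝ)..(2 * π), C * ρ t := hmono
        _ = C * mass := by rw [intervalIntegral.integral_const_mul, ← hmass']
    have hC : C ≤ mass / (2 * π) + (ε * mass + (1 / ε) * K) := by
      rw [hCdef]; exact add_le_add_right hIρd _
    calc I2 ≤ C * mass := hI2C
      _ ≤ (mass / (2 * π) + (ε * mass + (1 / ε) * K)) * mass :=
          mul_le_mul_of_nonneg_right hC hmass0
  -- energy inequality
  have henergy : |p| * K ≤ |E| + (|q| / 2) * I2 := by
    have hpK : p * K = (q / 2) * I2 - E := by linarith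
    calc |p| * K = |p * K| := by rw [abs_mul, abs_of_nonneg hK0]
      _ = |(q / 2) * I2 - E| := by rw [hpK]
      _ ≤ |(q / 2) * I2| + |E| := by
          rw [sub_eq_add_neg]
          exact (abs_add_le _ _).trans (by rw [abs_neg])
      _ = (|q| / 2) * I2 + |E| := by
          rw [abs_mul, abs_div, abs_two, abs_of_nonneg hI20]
      _ = |E| + (|q| / 2) * I2 := by ring
  -- conclude
  have hA0 : 0 ≤ A := by rw [hA]; positivity
  have hB0 : 0 ≤ B := by rw [hB]; positivity
  refine quad_bound_aux A B K hB0 hK0 ?_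
  rcases eq_or_lt_of_le hK0 with hKz | hKpos
  · have h1 : 0 ≤ A * Real.sqrt K := mul_nonneg hA0 (Real.sqrt_nonneg K)
    linarith
  rcases eq_or_lt_of_le hmass0 with hmz | hmpos
  · have h1 := hI2bound 1 one_pos
    rw [← hmz] at h1
    simp only [mul_zero] at h1
    have hKB : K ≤ |E| / |p| := by
      rw [le_div_iff₀ hpabs]
      have hI2z : I2 = 0 := le_antisymm h1 hI20
      rw [hI2z] at henergy
      linarith
    have h2 : 0 ≤ |q| * mass ^ 2 / (4 * π * |p|) := by positivity
    have h3 : 0 ≤ A * Real.sqrt K := mul_nonneg hA0 (Real.sqrt_nonneg K)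
    rw [hB]; linarith
  · set a := Real.sqrt mass with hadef
    set s := Real.sqrt K with hsdef
    have ha : 0 < a := Real.sqrt_pos.2 hmpos
    have hs : 0 < s := Real.sqrt_pos.2 hKpos
    have ha2 : a ^ 2 = mass := Real.sq_sqrt hmass0
    have hs2 : s ^ 2 = K := Real.sq_sqrt hK0
    have hε : 0 < s / a := div_pos hs ha
    have h1 := hI2bound (s / a) hε
    have hcomp : (mass / (2 * π) + ((s / a) * mass + (1 / (s / a)) * K)) * mass
        = mass ^ 2 / (2 * π) + 2 * a ^ 3 * s := by
      rw [← ha2, ← hs2]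
      field_simp
      ring
    rw [hcomp] at h1
    have h2 : (|q| / 2) * I2 ≤ (|q| / 2) * (mass ^ 2 / (2 * π) + 2 * a ^ 3 * s) :=
      mul_le_mul_of_nonneg_left h1 (by positivity)
    have h3 : (|q| / 2) * (mass ^ 2 / (2 * π) + 2 * a ^ 3 * s)
        = |q| * mass ^ 2 / (4 * π) + |q| * a ^ 3 * s := by ring
    have hrhs : |p| * (B + A * s) = |E| + |q| * mass ^ 2 / (4 * π) + |q| * a ^ 3 * s := by
      rw [hA, hB]
      field_simp
    have hchain : |p| * K ≤ |p| * (B + A * s) := by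
      rw [hrhs]; linarith
    exact le_of_mul_le_mul_left hchain hpabs
end
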